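/- Let p be a prime and A, B ⊆ F_p subsets such that A is additively 1-measurable with growth 𝓕 (as a subset of the additive group F_p) and B is multiplicatively 1-measurable with growth 𝓕 (as a subset of F_p^×). Then for any ε ∈ (0,1/2), provided p is sufficiently large in terms of 𝓕 and ε, one has ||A ∩ B| − |A||B|/p| ≤ εp. -/

import Mathlib

open Finset BigOperators Pointwise

section ZModDefs
variable (p : ℕ) [Fact (Nat.Prime p)]

/-- The standard additive character `e_p(x) = e^{2πi x/p}` of `F_p`. -/
noncomputable def ep (x : ZMod p) : ℂ :=
  Complex.exp (2 * Real.pi * Complex.I * (x.val : ℂ) / (p : ℂ))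

/-- Additive Fourier coefficient: `f̂(r) = 𝔼_n f(n) e^{-2πi r n/p}`. -/
noncomputable def addDft (f : ZMod p → ℂ) (r : ZMod p) : ℂ :=
  (p : ℂ)⁻¹ * ∑ n : ZMod p, f n * (starRingEnd ℂ) (ep p (r * n))

/-- Multiplicative Fourier coefficient with respect to a Dirichlet character mod `p`:
`f̂(χ) = (p-1)⁻¹ ∑_{n ∈ F_p^×} f(n) conj(χ(n))`. -/
noncomputable def mulDft (f : ZMod p → ℂ) (χ : DirichletCharacter ℂ p) : ℂ :=
  ((p : ℂ) - 1)⁻¹ * ∑ n : (ZMod p)ˣ, f n * (starRingEnd ℂ) (χ n)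

/-- ℓ¹ norm of the additive Fourier transform. -/
noncomputable def addL1Fourier (f : ZMod p → ℂ) : ℝ :=
  ∑ r : ZMod p, ‖addDft p f r‖

/-- ℓ¹ norm of the multiplicative Fourier transform. -/
noncomputable def mulL1Fourier (f : ZMod p → ℂ) : ℝ :=
  letI : Fintype (DirichletCharacter ℂ p) := Fintype.ofFinite _
  ∑ χ : DirichletCharacter ℂ p, ‖mulDft p f χ‖

/-- 1-boundedness. -/
def Bdd1 (f : ZMod p → ℂ) : Prop := ∀ x, ‖f x‖ ≤ 1

/-- Normalized L² norm over the additive group `F_p`. -/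
noncomputable def addL2 (f : ZMod p → ℂ) : ℝ :=
  Real.sqrt ((p : ℝ)⁻¹ * ∑ x : ZMod p, ‖f x‖ ^ 2)

/-- Normalized L² norm over the multiplicative group `F_p^×`. -/
noncomputable def mulL2 (f : ZMod p → ℂ) : ℝ :=
  Real.sqrt (((p : ℝ) - 1)⁻¹ * ∑ x : (ZMod p)ˣ, ‖f x‖ ^ 2)

/-- A growth function: increasing and positive on `ℝ_{>0}`. -/
def GrowthFn' (F : ℝ → ℝ) : Prop :=
  MonotoneOn F (Set.Ioi 0) ∧ ∀ M > 0, 0 < F M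

/-- A set `A ⊆ F_p` is additively 1-measurable with growth `F`. -/
def AddMeasSet1 (A : Set (ZMod p)) (F : ℝ → ℝ) : Prop :=
  ∀ M > 0, ∃ g : ZMod p → ℂ, Bdd1 p g ∧ addL1Fourier p g ≤ F M ∧
    addL2 p (fun x => (A.indicator (fun _ => (1 : ℂ)) x) - g x) ≤ M⁻¹

/-- A set `B ⊆ F_p` is multiplicatively 1-measurable with growth `F`
(viewed on `F_p^×`, ignoring the value at `0`). -/
def MulMeasSet1 (B : Set (ZMod p)) (F : ℝ → ℝ) : Prop :=
  ∀ M > 0, ∃ g : ZMod p → ℂ, Bdd1 p g ∧ mulL1Fourier p g ≤ F M ∧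
    mulL2 p (fun x => (B.indicator (fun _ => (1 : ℂ)) x) - g x) ≤ M⁻¹

end ZModDefs

/-! ### Auxiliary lemmas -/

section Aux

open Finset

variable (p : ℕ) [Fact (Nat.Prime p)]

set_option linter.unusedSectionVars false

noncomputable def zetaP : ℂ := Complex.exp (2 * Real.pi * Complex.I / p)

lemma zetaP_pow : zetaP p ^ p = 1 := by
  have hp : (p : ℂ) ≠ 0 := Nat.cast_ne_zero.mpr (Fact.out : Nat.Prime p).ne_zero
  rw [zetaP, ← Complex.exp_nat_mul]
  rw [show (p : ℂ) * (2 * Real.pi * Complex.I / p) = 2 * Real.pi * Complex.I by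
    field_simp]
  exact Complex.exp_two_pi_mul_I

noncomputable def psiP : AddChar (ZMod p) ℂ := AddChar.zmodChar p (zetaP_pow p)

lemma ep_eq_psi (x : ZMod p) : ep p x = psiP p x := by
  rw [psiP, AddChar.zmodChar_apply, zetaP, ← Complex.exp_nat_mul, ep]
  ring_nf

lemma psiP_primitive : AddChar.IsPrimitive (psiP p) := by
  apply AddChar.IsPrimitive.of_ne_one
  rw [AddChar.ne_one_iff]
  refine ⟨1, ?_⟩
  rw [← ep_eq_psi, ep]
  have hp2 : 2 ≤ p := (Fact.out : Nat.Prime p).two_le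
  have hv : ((1 : ZMod p).val : ℂ) = 1 := by
    rw [ZMod.val_one_eq_one_mod]
    simp [Nat.mod_eq_of_lt hp2]
  rw [hv]
  intro h
  rw [Complex.exp_eq_one_iff] at h
  obtain ⟨n, hn⟩ := h
  have hp : (p : ℂ) ≠ 0 := Nat.cast_ne_zero.mpr (Fact.out : Nat.Prime p).ne_zero
  have hpi : (2 * Real.pi * Complex.I) ≠ 0 := by
    simp [Real.pi_ne_zero, Complex.I_ne_zero]
  have h2 : (2 * Real.pi * Complex.I) * 1 = (2 * Real.pi * Complex.I) * ((n : ℂ) * p) := by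
    field_simp at hn; linear_combination (2 * Real.pi * Complex.I) * hn
  have h3 : (1 : ℂ) = (n : ℂ) * p := mul_left_cancel₀ hpi h2
  have h4 : ((1 : ℤ) : ℂ) = (((n * p : ℤ)) : ℂ) := by push_cast; simpa using h3
  have h5 : (1 : ℤ) = n * p := Int.cast_injective h4
  have : (p : ℤ) ∣ 1 := Dvd.intro n (by linarith)
  have := Int.le_of_dvd one_pos this
  omega

lemma hcharP : 0 < ringChar (ZMod p) := by
  rw [ZMod.ringChar_zmod_n]; exact (Fact.out : Nat.Prime p).pos

lemma hpC : (p : ℂ) ≠ 0 := Nat.cast_ne_zero.mpr (Fact.out : Nat.Prime p).ne_zero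

lemma hp1C : (p : ℂ) - 1 ≠ 0 := by
  have h2 := (Fact.out : Nat.Prime p).two_le
  have hc : ((p - 1 : ℕ) : ℂ) = (p:ℂ) - 1 := by
    push_cast [Nat.cast_sub (by omega : 1 ≤ p)]; ring
  rw [← hc]
  exact Nat.cast_ne_zero.mpr (by omega)

lemma one_le_sqrt_p : (1 : ℝ) ≤ Real.sqrt p := by
  rw [show (1:ℝ) = Real.sqrt 1 by simp]
  exact Real.sqrt_le_sqrt (by exact_mod_cast (Fact.out : Nat.Prime p).one_lt.le)

lemma sum_units_eq' {β : Type*} [AddCommGroup β] (f : ZMod p → β) :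
    ∑ x : (ZMod p)ˣ, f ↑x = ∑ a : ZMod p, f a - f 0 := by
  classical
  have h := Fintype.sum_eq_add_sum_compl (0 : ZMod p) f
  have hb : ∑ x : (ZMod p)ˣ, f ↑x = ∑ a ∈ ({0} : Finset (ZMod p))ᶜ, f a := by
    refine Finset.sum_bij (fun (x : (ZMod p)ˣ) _ => (x : ZMod p)) ?_ ?_ ?_ ?_
    · intro x _
      simp [Units.ne_zero x]
    · intro x _ y _ hxy
      exact Units.ext hxy
    · intro a ha
      simp only [Finset.mem_compl, Finset.mem_singleton] at ha
      exact ⟨Units.mk0 a ha, Finset.mem_univ _, rfl⟩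
    · intro x _
      rfl
  rw [hb, h]; abel

lemma sum_units_eq {β : Type*} [AddCommGroup β] (f : ZMod p → β) (h0 : f 0 = 0) :
    ∑ x : (ZMod p)ˣ, f ↑x = ∑ a : ZMod p, f a := by
  rw [sum_units_eq' p f, h0, sub_zero]

lemma card_units_p : Fintype.card (ZMod p)ˣ = p - 1 := by
  rw [ZMod.card_units_eq_totient, Nat.totient_prime (Fact.out : Nat.Prime p)]

lemma add_inversion (g : ZMod p → ℂ) (x : ZMod p) :
    ∑ r : ZMod p, addDft p g r * ep p (r * x) = g x := by
  classical
  have key : ∀ n : ZMod p, ∑ r : ZMod p,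
      (starRingEnd ℂ) (ep p (r * n)) * ep p (r * x)
      = if n = x then (p : ℂ) else 0 := by
    intro n
    have e1 : ∀ r : ZMod p, (starRingEnd ℂ) (ep p (r * n)) * ep p (r * x)
        = psiP p (r * (x - n)) := by
      intro r
      rw [ep_eq_psi, ep_eq_psi, AddChar.starComp_apply (hcharP p), AddChar.inv_apply,
        ← AddChar.map_add_eq_mul]
      congr 1; ring
    simp_rw [e1]
    rw [AddChar.sum_mulShift _ (psiP_primitive p)]
    simp only [ZMod.card, sub_eq_zero]
    by_cases h : n = x
    · simp [h]
    · rw [if_neg (fun hh => h hh.symm), if_neg h, Nat.cast_zero]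
  calc ∑ r, addDft p g r * ep p (r * x)
      = (p:ℂ)⁻¹ * ∑ n, g n * (∑ r, (starRingEnd ℂ) (ep p (r*n)) * ep p (r*x)) := by
        simp only [addDft, Finset.sum_mul, Finset.mul_sum, mul_assoc]
        rw [Finset.sum_comm]
    _ = g x := by
        simp_rw [key, mul_ite, mul_zero, Finset.sum_ite_eq' Finset.univ x]
        simp only [Finset.mem_univ, if_true]
        rw [mul_comm (g x), ← mul_assoc, inv_mul_cancel₀ (hpC p), one_mul]

lemma mul_inversion (h : ZMod p → ℂ) (x : (ZMod p)ˣ) :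
    ∑ χ : DirichletCharacter ℂ p, mulDft p h χ * χ x = h x := by
  classical
  have key : ∀ n : (ZMod p)ˣ, ∑ χ : DirichletCharacter ℂ p,
      (starRingEnd ℂ) (χ n) * χ x = if n = x then ((p : ℂ) - 1) else 0 := by
    intro n
    have e1 : ∀ χ : DirichletCharacter ℂ p, (starRingEnd ℂ) (χ n) * χ x
        = χ ((n : ZMod p))⁻¹ * χ x := by
      intro χ
      rw [show (starRingEnd ℂ) (χ n) = star (χ (n : ZMod p)) from rfl,
        MulChar.star_apply', MulChar.inv_apply']
    simp_rw [e1]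
    haveI : NeZero p := ⟨(Fact.out : Nat.Prime p).ne_zero⟩
    rw [DirichletCharacter.sum_char_inv_mul_char_eq ℂ n.isUnit (↑x : ZMod p)]
    have htot : (p.totient : ℂ) = (p : ℂ) - 1 := by
      rw [Nat.totient_prime (Fact.out : Nat.Prime p)]
      push_cast [Nat.cast_sub (by have := (Fact.out : Nat.Prime p).two_le; omega : 1 ≤ p)]; ring
    by_cases hnx : n = x
    · rw [if_pos (by rw [hnx]), if_pos hnx, htot]
    · rw [if_neg (by simpa [Units.ext_iff] using hnx), if_neg hnx]
  calc ∑ χ : DirichletCharacter ℂ p, mulDft p h χ * χ x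
      = ((p:ℂ)-1)⁻¹ * ∑ n : (ZMod p)ˣ, h n *
          (∑ χ : DirichletCharacter ℂ p, (starRingEnd ℂ) (χ n) * χ x) := by
        simp only [mulDft, Finset.sum_mul, Finset.mul_sum, mul_assoc]
        rw [Finset.sum_comm]
    _ = h x := by
        simp_rw [key, mul_ite, mul_zero, Finset.sum_ite_eq' Finset.univ x]
        simp only [Finset.mem_univ, if_true]
        rw [mul_comm ((h x : ℂ)), ← mul_assoc, inv_mul_cancel₀ (hp1C p), one_mul]

lemma G_bound (r : ZMod p) (χ : DirichletCharacter ℂ p) (h : ¬(r = 0 ∧ χ = 1)) :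
    ‖∑ x : (ZMod p)ˣ, ep p (r * x) * χ x‖ ≤ Real.sqrt p := by
  classical
  haveI : Nontrivial (ZMod p) := ZMod.nontrivial_iff.mpr (Fact.out : Nat.Prime p).ne_one
  by_cases hχ : χ = 1
  · have hr : r ≠ 0 := fun hr => h ⟨hr, hχ⟩
    subst hχ
    have e1 : ∀ x : (ZMod p)ˣ, ep p (r * x) * (1 : DirichletCharacter ℂ p) x
        = psiP p ((x : ZMod p) * r) := by
      intro x
      rw [MulChar.one_apply_coe, mul_one, ep_eq_psi, mul_comm]
    simp_rw [e1]
    rw [sum_units_eq' p (fun a => psiP p (a * r))]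
    rw [AddChar.sum_mulShift _ (psiP_primitive p), if_neg hr]
    simp only [zero_mul, AddChar.map_zero_eq_one, zero_sub, Nat.cast_zero]
    simpa using one_le_sqrt_p p
  · have e3 : ∑ x : (ZMod p)ˣ, ep p (r * ↑x) * χ ↑x
        = gaussSum χ ((psiP p).mulShift r) := by
      rw [gaussSum, ← sum_units_eq p (fun a => χ a * (psiP p).mulShift r a) (by
        show χ 0 * _ = 0
        rw [MulChar.map_nonunit χ not_isUnit_zero, zero_mul])]
      apply Finset.sum_congr rfl
      intro x _
      rw [AddChar.mulShift_apply, ← ep_eq_psi, mul_comm]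
    rw [e3]
    by_cases hr : r = 0
    · subst hr
      have e4 : gaussSum χ ((psiP p).mulShift 0) = ∑ a : ZMod p, χ a := by
        apply Finset.sum_congr rfl
        intro a _
        rw [AddChar.mulShift_apply, zero_mul, AddChar.map_zero_eq_one, mul_one]
      rw [e4, MulChar.sum_eq_zero_of_ne_one hχ]
      simpa using Real.sqrt_nonneg (p : ℝ)
    · have hprim' : AddChar.IsPrimitive ((psiP p).mulShift r) :=
        AddChar.IsPrimitive.of_ne_one (psiP_primitive p hr)
      have hmul := gaussSum_mul_gaussSum_eq_card hχ hprim'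
      have hconj : (starRingEnd ℂ) (gaussSum χ ((psiP p).mulShift r))
          = gaussSum χ⁻¹ ((psiP p).mulShift r)⁻¹ := by
        rw [gaussSum, gaussSum, map_sum]
        apply Finset.sum_congr rfl
        intro a _
        rw [map_mul, starRingEnd_apply, MulChar.star_apply',
          AddChar.starComp_apply (hcharP p)]
      have hns : (Complex.normSq (gaussSum χ ((psiP p).mulShift r)) : ℂ) = (p : ℂ) := by
        rw [← Complex.mul_conj, hconj, hmul, ZMod.card]
      have hns' : Complex.normSq (gaussSum χ ((psiP p).mulShift r)) = (p : ℝ) := by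
        exact_mod_cast hns
      rw [Complex.norm_def, hns']

lemma abs_sub_le_abs_add (a b : ℂ) :
    ‖a - b‖ ≤ ‖a‖ + ‖b‖ := by
  calc ‖a - b‖ = ‖a + -b‖ := by rw [sub_eq_add_neg]
    _ ≤ ‖a‖ + ‖-b‖ := norm_add_le _ _
    _ = ‖a‖ + ‖b‖ := by rw [norm_neg]

lemma sum_abs_le {ι : Type*} [Fintype ι] (u : ι → ℂ) (C : ℝ)
    (h : ∑ i, ‖u i‖ ^ 2 ≤ C) :
    ∑ i, ‖u i‖ ≤ Real.sqrt (Fintype.card ι) * Real.sqrt C := by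
  calc ∑ i, ‖u i‖ = ∑ i, 1 * ‖u i‖ := by simp
    _ ≤ Real.sqrt (∑ i : ι, (1:ℝ) ^ 2) * Real.sqrt (∑ i, ‖u i‖ ^ 2) :=
        Real.sum_mul_le_sqrt_mul_sqrt _ _ _
    _ ≤ Real.sqrt (Fintype.card ι) * Real.sqrt C := by
        apply mul_le_mul
        · apply Real.sqrt_le_sqrt; simp
        · exact Real.sqrt_le_sqrt h
        · exact Real.sqrt_nonneg _
        · exact Real.sqrt_nonneg _

lemma addErr (u : ZMod p → ℂ) (M : ℝ) (hM : 0 < M) (h : addL2 p u ≤ M⁻¹) :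
    ∑ x : ZMod p, ‖u x‖ ≤ p / M := by
  have hp0 : (0:ℝ) < p := by exact_mod_cast (Fact.out : Nat.Prime p).pos
  have h1 : (p : ℝ)⁻¹ * ∑ x, ‖u x‖ ^ 2 ≤ (M⁻¹) ^ 2 := by
    have := Real.sqrt_le_sqrt (le_of_eq (rfl : addL2 p u = addL2 p u))
    have h2 : Real.sqrt ((p : ℝ)⁻¹ * ∑ x, ‖u x‖ ^ 2) ≤ M⁻¹ := h
    have h3 := pow_le_pow_left₀ (Real.sqrt_nonneg _) h2 2
    rwa [Real.sq_sqrt (by positivity)] at h3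
  have h4 : ∑ x, ‖u x‖ ^ 2 ≤ (p : ℝ) * (M⁻¹) ^ 2 := by
    rw [inv_mul_le_iff₀ hp0] at h1
    exact h1
  calc ∑ x, ‖u x‖
      ≤ Real.sqrt (Fintype.card (ZMod p)) * Real.sqrt ((p : ℝ) * (M⁻¹)^2) :=
        sum_abs_le _ _ h4
    _ = p / M := by
        rw [ZMod.card, Real.sqrt_mul (le_of_lt hp0), Real.sqrt_sq (by positivity),
          ← mul_assoc, Real.mul_self_sqrt (le_of_lt hp0), div_eq_mul_inv]

lemma mulErr (u : ZMod p → ℂ) (M : ℝ) (hM : 0 < M) (h : mulL2 p u ≤ M⁻¹) :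
    ∑ x : (ZMod p)ˣ, ‖u ↑x‖ ≤ p / M := by
  have hp2 : 2 ≤ p := (Fact.out : Nat.Prime p).two_le
  have hp0 : (0:ℝ) < p := by positivity
  have hp1 : (0:ℝ) < (p:ℝ) - 1 := by
    have : (2:ℝ) ≤ p := by exact_mod_cast hp2
    linarith
  have h2 : Real.sqrt (((p : ℝ) - 1)⁻¹ * ∑ x : (ZMod p)ˣ, ‖u ↑x‖ ^ 2) ≤ M⁻¹ := h
  have h3 := pow_le_pow_left₀ (Real.sqrt_nonneg _) h2 2
  rw [Real.sq_sqrt (by positivity)] at h3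
  have h4 : ∑ x : (ZMod p)ˣ, ‖u ↑x‖ ^ 2 ≤ ((p : ℝ) - 1) * (M⁻¹) ^ 2 := by
    rw [inv_mul_le_iff₀ hp1] at h3
    exact h3
  have h5 : ∑ x : (ZMod p)ˣ, ‖u ↑x‖ ^ 2 ≤ (p : ℝ) * (M⁻¹) ^ 2 := by
    refine h4.trans (mul_le_mul_of_nonneg_right (by linarith) (by positivity))
  calc ∑ x : (ZMod p)ˣ, ‖u ↑x‖
      ≤ Real.sqrt (Fintype.card (ZMod p)ˣ) * Real.sqrt ((p : ℝ) * (M⁻¹)^2) :=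
        sum_abs_le _ _ h5
    _ ≤ Real.sqrt p * Real.sqrt ((p : ℝ) * (M⁻¹)^2) := by
        apply mul_le_mul_of_nonneg_right _ (Real.sqrt_nonneg _)
        apply Real.sqrt_le_sqrt
        rw [card_units_p]
        have : ((p - 1 : ℕ) : ℝ) ≤ (p : ℝ) := by
          push_cast [Nat.cast_sub (by omega : 1 ≤ p)]; linarith
        exact this
    _ = p / M := by
        rw [Real.sqrt_mul (le_of_lt hp0), Real.sqrt_sq (by positivity),
          ← mul_assoc, Real.mul_self_sqrt (le_of_lt hp0), div_eq_mul_inv]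

lemma sum_indicator_ncard (S : Set (ZMod p)) :
    ∑ x : ZMod p, S.indicator (fun _ => (1:ℂ)) x = (S.ncard : ℂ) := by
  classical
  have h1 : ∀ x, S.indicator (fun _ => (1:ℂ)) x = if x ∈ S then 1 else 0 := by
    intro x; rw [Set.indicator_apply]
  simp_rw [h1]
  rw [Finset.sum_boole]
  congr 1
  rw [Set.ncard_eq_toFinset_card']
  rw [Set.toFinset_card]
  rw [Fintype.card_subtype]

end Aux

set_option maxHeartbeats 1600000 in
/-- If `A ⊆ F_p` is additively 1-measurable and `B ⊆ F_p` is multiplicatively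
1-measurable, both with growth `F`, then for `p` large enough in terms of `F, ε`,
`||A ∩ B| − |A||B|/p| ≤ εp`. -/
theorem measurable_sets_intersect (F : ℝ → ℝ) (hF : GrowthFn' F)
    (ε : ℝ) (hε0 : 0 < ε) (hε1 : ε < 1 / 2) :
    ∃ p₀ : ℕ, ∀ (p : ℕ) [Fact (Nat.Prime p)], p₀ ≤ p →
    ∀ A B : Set (ZMod p), AddMeasSet1 p A F → MulMeasSet1 p B F →
      |((A ∩ B).ncard : ℝ) - (A.ncard : ℝ) * (B.ncard : ℝ) / p| ≤ ε * p := by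
  classical
  set M : ℝ := 8 / ε with hMdef
  have hM : 0 < M := by positivity
  set C : ℝ := F M ^ 2 + 4 with hCdef
  have hC : 0 < C := by positivity
  refine ⟨⌈(2 * C / ε) ^ 2⌉₊ + 1, ?_⟩
  intro p _inst hp A B hA hB
  have hprime : Nat.Prime p := Fact.out
  have hp2 : 2 ≤ p := hprime.two_le
  have hpR : (0:ℝ) < p := by exact_mod_cast hprime.pos
  have hsqrtp : 2 * C / ε ≤ Real.sqrt p := by
    have h1 : (2 * C / ε) ^ 2 ≤ (p : ℝ) := by
      have h2 : ((⌈(2 * C / ε) ^ 2⌉₊ : ℝ)) ≤ p := by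
        exact_mod_cast le_trans (Nat.le_succ _) hp
      exact le_trans (Nat.le_ceil _) h2
    have h0 : 0 ≤ 2 * C / ε := by positivity
    nlinarith [Real.sq_sqrt hpR.le, Real.sqrt_nonneg (p:ℝ)]
  have hsq1 : (1:ℝ) ≤ Real.sqrt p := one_le_sqrt_p p
  obtain ⟨g, hg1, hgF, hgL2⟩ := hA M hM
  obtain ⟨h, hh1, hhF, hhL2⟩ := hB M hM
  set f : ZMod p → ℂ := A.indicator (fun _ => 1) with hfdef
  set b : ZMod p → ℂ := B.indicator (fun _ => 1) with hbdef
  have hf1 : ∀ x, ‖f x‖ ≤ 1 := by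
    intro x; by_cases hx : x ∈ A <;> simp [hfdef, Set.indicator_apply, hx]
  have hb1 : ∀ x, ‖b x‖ ≤ 1 := by
    intro x; by_cases hx : x ∈ B <;> simp [hbdef, Set.indicator_apply, hx]
  have hfg : ∑ x : ZMod p, ‖f x - g x‖ ≤ p / M :=
    addErr p (fun x => f x - g x) M hM hgL2
  have hbh : ∑ x : (ZMod p)ˣ, ‖b ↑x - h ↑x‖ ≤ p / M :=
    mulErr p (fun x => b x - h x) M hM hhL2
  have hhF' : ∑ χ : DirichletCharacter ℂ p, ‖mulDft p h χ‖ ≤ F M := by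
    have hinst : (Fintype.ofFinite (DirichletCharacter ℂ p)) = DirichletCharacter.fintype :=
      Subsingleton.elim _ _
    unfold mulL1Fourier at hhF
    rw [hinst] at hhF
    exact hhF
  have hgF' : ∑ r : ZMod p, ‖addDft p g r‖ ≤ F M := hgF
  -- key sums
  set S : ℂ := ∑ x : ZMod p, f x * b x with hSdef
  set T : ℂ := ∑ x : ZMod p, g x * h x with hTdef
  have hS : S = ((A ∩ B).ncard : ℂ) := by
    rw [hSdef, ← sum_indicator_ncard p (A ∩ B)]
    apply Finset.sum_congr rfl
    intro x _
    by_cases hxA : x ∈ A <;> by_cases hxB : x ∈ B <;>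
      simp [hfdef, hbdef, Set.indicator_apply, hxA, hxB]
  have hSumf : ∑ x : ZMod p, f x = (A.ncard : ℂ) := sum_indicator_ncard p A
  have hSumb : ∑ x : ZMod p, b x = (B.ncard : ℂ) := sum_indicator_ncard p B
  -- Step 1 : |S - T| ≤ 2 p/M + 2
  have est1 : ‖S - T‖ ≤ 2 * (p / M) + 2 := by
    have e1 : S - T = ∑ x : ZMod p, (f x * b x - g x * h x) := by
      rw [hSdef, hTdef, Finset.sum_sub_distrib]
    rw [e1]
    calc ‖∑ x : ZMod p, (f x * b x - g x * h x)‖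
        ≤ ∑ x : ZMod p, ‖f x * b x - g x * h x‖ :=
          norm_sum_le _ _
      _ ≤ ∑ x : ZMod p, (‖f x - g x‖
            + ‖g x‖ * ‖b x - h x‖) := by
          apply Finset.sum_le_sum
          intro x _
          have e2 : f x * b x - g x * h x = (f x - g x) * b x + g x * (b x - h x) := by
            ring
          rw [e2]
          calc ‖(f x - g x) * b x + g x * (b x - h x)‖
              ≤ ‖(f x - g x) * b x‖ + ‖g x * (b x - h x)‖ :=
                norm_add_le _ _
            _ ≤ ‖f x - g x‖ + ‖g x‖ * ‖b x - h x‖ := by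
                rw [norm_mul, norm_mul]
                have := hb1 x
                nlinarith [norm_nonneg (f x - g x), norm_nonneg (b x),
                  norm_nonneg (g x), norm_nonneg (b x - h x)]
      _ ≤ (p / M) + ((p / M) + 2) := by
          rw [Finset.sum_add_distrib]
          apply add_le_add hfg
          -- split off x = 0
          have e3 := sum_units_eq' p (fun x => ‖g x‖ * ‖b x - h x‖)
          have e4 : ∑ x : ZMod p, ‖g x‖ * ‖b x - h x‖
              = (∑ x : (ZMod p)ˣ, ‖g ↑x‖ * ‖b ↑x - h ↑x‖)
                + ‖g 0‖ * ‖b 0 - h 0‖ := by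
            rw [e3]; ring
          rw [e4]
          have e5 : ∑ x : (ZMod p)ˣ, ‖g ↑x‖ * ‖b ↑x - h ↑x‖
              ≤ ∑ x : (ZMod p)ˣ, ‖b ↑x - h ↑x‖ := by
            apply Finset.sum_le_sum
            intro x _
            have := hg1 (↑x : ZMod p)
            nlinarith [norm_nonneg (b ↑x - h ↑x), norm_nonneg (g ↑x)]
          have e6 : ‖g 0‖ * ‖b 0 - h 0‖ ≤ 2 := by
            have h1 := hg1 (0 : ZMod p)
            have h2 : ‖b 0 - h 0‖ ≤ 2 := by
              calc ‖b 0 - h 0‖ ≤ ‖b 0‖ + ‖h 0‖ :=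
                abs_sub_le_abs_add _ _
              _ ≤ 2 := by have := hb1 0; have := hh1 0; linarith
            nlinarith [norm_nonneg (g 0), norm_nonneg (b 0 - h 0)]
          have := e5.trans hbh
          linarith
      _ = 2 * (p / M) + 2 := by ring
  -- Step 2 : Fourier expansion of T over units
  set u : ZMod p × DirichletCharacter ℂ p → ℂ := fun z =>
    (addDft p g z.1 * mulDft p h z.2) * (∑ x : (ZMod p)ˣ, ep p (z.1 * ↑x) * z.2 ↑x)
    with hudef
  have est2 : T = g 0 * h 0 + ∑ z : ZMod p × DirichletCharacter ℂ p, u z := by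
    have e1 : ∑ x : (ZMod p)ˣ, g ↑x * h ↑x = T - g 0 * h 0 := by
      rw [hTdef, sum_units_eq' p (fun a => g a * h a)]
    have e2 : ∑ x : (ZMod p)ˣ, g ↑x * h ↑x
        = ∑ z : ZMod p × DirichletCharacter ℂ p, u z := by
      calc ∑ x : (ZMod p)ˣ, g ↑x * h ↑x
          = ∑ x : (ZMod p)ˣ, ∑ r : ZMod p, ∑ χ : DirichletCharacter ℂ p,
              (addDft p g r * ep p (r * ↑x)) * (mulDft p h χ * χ ↑x) := by
            apply Finset.sum_congr rfl
            intro x _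
            rw [← add_inversion p g ↑x, ← mul_inversion p h x, Finset.sum_mul_sum]
        _ = ∑ r : ZMod p, ∑ χ : DirichletCharacter ℂ p,
              (addDft p g r * mulDft p h χ) *
                (∑ x : (ZMod p)ˣ, ep p (r * ↑x) * χ ↑x) := by
            rw [Finset.sum_comm]
            apply Finset.sum_congr rfl
            intro r _
            rw [Finset.sum_comm]
            apply Finset.sum_congr rfl
            intro χ _
            rw [Finset.mul_sum]
            apply Finset.sum_congr rfl
            intro x _
            ring
        _ = ∑ z : ZMod p × DirichletCharacter ℂ p, u z := by
            rw [Fintype.sum_prod_type]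
    rw [← e2, e1]; ring
  -- value of the main term
  have hmain : u (0, 1) = addDft p g 0 * mulDft p h 1 * ((p:ℂ) - 1) := by
    have e1 : ∀ x : (ZMod p)ˣ, ep p ((0 : ZMod p) * ↑x) * (1 : DirichletCharacter ℂ p) ↑x
        = 1 := by
      intro x
      rw [MulChar.one_apply_coe, mul_one, zero_mul]
      simp [ep, ZMod.val_zero]
    rw [hudef]
    simp only
    simp_rw [e1]
    rw [Finset.sum_const, Finset.card_univ, card_units_p, nsmul_eq_mul, mul_one]
    congr 1
    push_cast [Nat.cast_sub (by omega : 1 ≤ p)]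
    ring
  -- Step 3 : bound the error terms
  have est3 : ‖T - g 0 * h 0 - addDft p g 0 * mulDft p h 1 * ((p:ℂ) - 1)‖
      ≤ Real.sqrt p * (F M * F M) := by
    have e1 : T - g 0 * h 0 - addDft p g 0 * mulDft p h 1 * ((p:ℂ) - 1)
        = ∑ z ∈ Finset.univ.erase ((0 : ZMod p), (1 : DirichletCharacter ℂ p)), u z := by
      have e2 := Finset.sum_erase_add Finset.univ u
        (Finset.mem_univ ((0 : ZMod p), (1 : DirichletCharacter ℂ p)))
      rw [est2, ← hmain, ← e2]; ring
    rw [e1]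
    calc ‖∑ z ∈ Finset.univ.erase ((0:ZMod p), (1:DirichletCharacter ℂ p)), u z‖
        ≤ ∑ z ∈ Finset.univ.erase ((0:ZMod p), (1:DirichletCharacter ℂ p)),
            ‖u z‖ := norm_sum_le _ _
      _ ≤ ∑ z ∈ Finset.univ.erase ((0:ZMod p), (1:DirichletCharacter ℂ p)),
            (‖addDft p g z.1‖ * ‖mulDft p h z.2‖) * Real.sqrt p := by
          apply Finset.sum_le_sum
          intro z hz
          rw [hudef]
          simp only
          rw [norm_mul, norm_mul]
          apply mul_le_mul_of_nonneg_left _ (by positivity)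
          apply G_bound
          intro hcon
          apply Finset.ne_of_mem_erase hz
          exact Prod.ext hcon.1 hcon.2
      _ ≤ ∑ z : ZMod p × DirichletCharacter ℂ p,
            (‖addDft p g z.1‖ * ‖mulDft p h z.2‖) * Real.sqrt p := by
          apply Finset.sum_le_sum_of_subset_of_nonneg (Finset.erase_subset _ _)
          intro z _ _
          positivity
      _ = (∑ r : ZMod p, ‖addDft p g r‖) *
            (∑ χ : DirichletCharacter ℂ p, ‖mulDft p h χ‖) * Real.sqrt p := by
          rw [Finset.sum_mul_sum, Fintype.sum_prod_type, Finset.sum_mul]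
          apply Finset.sum_congr rfl
          intro r _
          rw [Finset.sum_mul]
      _ ≤ F M * F M * Real.sqrt p := by
          apply mul_le_mul_of_nonneg_right _ (Real.sqrt_nonneg _)
          apply mul_le_mul hgF' hhF' (by positivity) ((by positivity : (0:ℝ) ≤ ∑ r : ZMod p, ‖addDft p g r‖).trans hgF')
      _ = Real.sqrt p * (F M * F M) := by ring
  -- main-term estimates
  have hdft0 : addDft p g 0 = (p:ℂ)⁻¹ * ∑ n : ZMod p, g n := by
    rw [addDft]
    congr 1
    apply Finset.sum_congr rfl
    intro n _
    rw [zero_mul]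
    simp [ep, ZMod.val_zero]
  have hdft1 : mulDft p h 1 = ((p:ℂ) - 1)⁻¹ * ∑ n : (ZMod p)ˣ, h ↑n := by
    rw [mulDft]
    congr 1
    apply Finset.sum_congr rfl
    intro n _
    rw [MulChar.one_apply_coe]
    simp
  have est4 : ‖addDft p g 0‖ ≤ 1 := by
    rw [hdft0, norm_mul]
    have h1 : ‖(p:ℂ)⁻¹‖ = (p:ℝ)⁻¹ := by
      rw [norm_inv, Complex.norm_natCast]
    rw [h1]
    have h2 : ‖∑ n : ZMod p, g n‖ ≤ (p : ℝ) := by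
      calc ‖∑ n : ZMod p, g n‖ ≤ ∑ n : ZMod p, ‖g n‖ :=
            norm_sum_le _ _
        _ ≤ ∑ _n : ZMod p, (1:ℝ) := Finset.sum_le_sum (fun n _ => hg1 n)
        _ = (p:ℝ) := by simp [ZMod.card]
    calc (p:ℝ)⁻¹ * ‖∑ n : ZMod p, g n‖ ≤ (p:ℝ)⁻¹ * p := by
          apply mul_le_mul_of_nonneg_left h2 (by positivity)
      _ = 1 := by field_simp
  have est5 : ‖addDft p g 0 - (A.ncard : ℂ) / p‖ ≤ 1 / M := by
    have e1 : addDft p g 0 - (A.ncard : ℂ) / p = (p:ℂ)⁻¹ * ∑ n : ZMod p, (g n - f n) := by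
      rw [hdft0, Finset.sum_sub_distrib, hSumf]
      ring
    rw [e1, norm_mul, norm_inv, Complex.norm_natCast]
    have h2 : ‖∑ n : ZMod p, (g n - f n)‖ ≤ (p:ℝ) / M := by
      calc ‖∑ n : ZMod p, (g n - f n)‖
          ≤ ∑ n : ZMod p, ‖g n - f n‖ := norm_sum_le _ _
        _ = ∑ n : ZMod p, ‖f n - g n‖ := by
            apply Finset.sum_congr rfl
            intro n _
            exact norm_sub_rev _ _
        _ ≤ (p:ℝ) / M := hfg
    calc (p:ℝ)⁻¹ * ‖∑ n : ZMod p, (g n - f n)‖ ≤ (p:ℝ)⁻¹ * ((p:ℝ)/M) := by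
          apply mul_le_mul_of_nonneg_left h2 (by positivity)
      _ = 1 / M := by field_simp
  have est6 : ‖((p:ℂ) - 1) * mulDft p h 1 - (B.ncard : ℂ)‖ ≤ p / M + 1 := by
    have e0 : ((p:ℂ) - 1) * mulDft p h 1 = ∑ n : (ZMod p)ˣ, h ↑n := by
      rw [hdft1, ← mul_assoc, mul_inv_cancel₀ (hp1C p), one_mul]
    have e1 : ∑ n : (ZMod p)ˣ, b ↑n = (B.ncard : ℂ) - b 0 := by
      rw [sum_units_eq' p b, hSumb]
    have e2 : ((p:ℂ) - 1) * mulDft p h 1 - (B.ncard : ℂ)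
        = (∑ n : (ZMod p)ˣ, (h ↑n - b ↑n)) - b 0 := by
      rw [Finset.sum_sub_distrib, e0, e1]
      ring
    rw [e2]
    calc ‖(∑ n : (ZMod p)ˣ, (h ↑n - b ↑n)) - b 0‖
        ≤ ‖∑ n : (ZMod p)ˣ, (h ↑n - b ↑n)‖ + ‖b 0‖ :=
          abs_sub_le_abs_add _ _
      _ ≤ (p / M) + 1 := by
          apply add_le_add _ (hb1 0)
          calc ‖∑ n : (ZMod p)ˣ, (h ↑n - b ↑n)‖
              ≤ ∑ n : (ZMod p)ˣ, ‖h ↑n - b ↑n‖ := norm_sum_le _ _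
            _ = ∑ n : (ZMod p)ˣ, ‖b ↑n - h ↑n‖ := by
                apply Finset.sum_congr rfl
                intro n _
                exact norm_sub_rev _ _
            _ ≤ p / M := hbh
  have hBle : (B.ncard : ℝ) ≤ (p : ℝ) := by
    have h1 : B.ncard ≤ (Set.univ : Set (ZMod p)).ncard :=
      Set.ncard_le_ncard (Set.subset_univ B) Set.finite_univ
    have h2 : (Set.univ : Set (ZMod p)).ncard = p := by
      rw [Set.ncard_univ, Nat.card_eq_fintype_card, ZMod.card]
    exact_mod_cast h2 ▸ h1
  have est7 : ‖addDft p g 0 * mulDft p h 1 * ((p:ℂ) - 1)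
      - (A.ncard : ℂ) * (B.ncard : ℂ) / p‖ ≤ (p / M + 1) + (p / M) := by
    have e1 : addDft p g 0 * mulDft p h 1 * ((p:ℂ) - 1)
        - (A.ncard : ℂ) * (B.ncard : ℂ) / p
        = addDft p g 0 * (((p:ℂ) - 1) * mulDft p h 1 - (B.ncard : ℂ))
          + (addDft p g 0 - (A.ncard : ℂ) / p) * (B.ncard : ℂ) := by
      ring
    rw [e1]
    calc ‖addDft p g 0 * (((p:ℂ) - 1) * mulDft p h 1 - (B.ncard : ℂ))
          + (addDft p g 0 - (A.ncard : ℂ) / p) * (B.ncard : ℂ)‖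
        ≤ ‖addDft p g 0‖ * ‖((p:ℂ) - 1) * mulDft p h 1 - (B.ncard : ℂ)‖
          + ‖addDft p g 0 - (A.ncard : ℂ) / p‖ * ‖(B.ncard : ℂ)‖ := by
          refine (norm_add_le _ _).trans ?_
          rw [norm_mul, norm_mul]
      _ ≤ 1 * (p / M + 1) + (1 / M) * (p : ℝ) := by
          apply add_le_add
          · apply mul_le_mul est4 est6 (norm_nonneg _) zero_le_one
          · have hb : ‖(B.ncard : ℂ)‖ ≤ (p : ℝ) := by
              rw [Complex.norm_natCast]
              exact hBle
            apply mul_le_mul est5 hb (norm_nonneg _) (by positivity)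
      _ = (p / M + 1) + (p / M) := by
          field_simp
  -- combine everything
  have hg0h0 : ‖g 0 * h 0‖ ≤ 1 := by
    rw [norm_mul]
    have := hg1 0; have := hh1 0
    nlinarith [norm_nonneg (g 0), norm_nonneg (h 0)]
  have total : ‖S - (A.ncard : ℂ) * (B.ncard : ℂ) / p‖
      ≤ 4 * (p / M) + 4 + Real.sqrt p * (F M * F M) := by
    have e1 : S - (A.ncard : ℂ) * (B.ncard : ℂ) / p
        = (S - T) + (T - g 0 * h 0 - addDft p g 0 * mulDft p h 1 * ((p:ℂ) - 1))
          + g 0 * h 0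
          + (addDft p g 0 * mulDft p h 1 * ((p:ℂ) - 1)
             - (A.ncard : ℂ) * (B.ncard : ℂ) / p) := by
      ring
    rw [e1]
    refine le_trans ((norm_add_le _ _).trans (add_le_add
      ((norm_add_le _ _).trans (add_le_add
        ((norm_add_le _ _).trans (add_le_add est1 est3)) hg0h0)) est7)) ?_
    linarith
  -- numerics
  have hnum : 4 * ((p:ℝ) / M) + 4 + Real.sqrt p * (F M * F M) ≤ ε * p := by
    have hm : (p:ℝ) / M = ε * p / 8 := by
      rw [hMdef]; field_simp
    have hsqsq : Real.sqrt p * Real.sqrt p = (p:ℝ) := Real.mul_self_sqrt hpR.le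
    have hCs : C ≤ ε * Real.sqrt p / 2 := by
      rw [div_le_iff₀ hε0] at hsqrtp
      · nlinarith
    have h4 : 4 + Real.sqrt p * (F M * F M) ≤ Real.sqrt p * C := by
      rw [hCdef]
      nlinarith [Real.sqrt_nonneg (p:ℝ), sq_nonneg (F M)]
    have h5 : Real.sqrt p * C ≤ ε * p / 2 := by
      calc Real.sqrt p * C ≤ Real.sqrt p * (ε * Real.sqrt p / 2) := by
            apply mul_le_mul_of_nonneg_left hCs (Real.sqrt_nonneg _)
        _ = ε * (Real.sqrt p * Real.sqrt p) / 2 := by ring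
        _ = ε * p / 2 := by rw [hsqsq]
    rw [hm]
    linarith
  -- conclude
  have hreal : |((A ∩ B).ncard : ℝ) - (A.ncard : ℝ) * (B.ncard : ℝ) / p|
      = ‖S - (A.ncard : ℂ) * (B.ncard : ℂ) / p‖ := by
    rw [hS]
    rw [show ((A ∩ B).ncard : ℂ) - (A.ncard : ℂ) * (B.ncard : ℂ) / p
        = ((((A ∩ B).ncard : ℝ) - (A.ncard : ℝ) * (B.ncard : ℝ) / p : ℝ) : ℂ) by
      push_cast; ring]
    rw [Complex.norm_real, Real.norm_eq_abs]
  rw [hreal]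
  exact total.trans hnum
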